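/- arXiv:1906.03296 — 2 statements merged into one kernel-verified Lean document; each statement's English description precedes it below -/
import Mathlib

section
/- Let b be a Baer subline of ℓ∞ in PG(2,q²) and let P̄, Q̄ ∈ ℓ∞ be conjugate with respect to b. Let P, Q be the points of the transversal g corresponding to P̄, Q̄. Then in PG(4,q²) the lines PQ^q and P^qQ each meet every line of PG(4,q²) that meets all of the q+1 extended spread lines [T]⋆ for T̄ ∈ b; that is, PQ^q and P^qQ are lines of the extended regulus determined by {[T] : T̄ ∈ b}. -/
open scoped Classical
open Matrix

noncomputable section

namespace BaerConics

/-- Points of the projective space `PG(n-1, K)` as projectivization of `Fin n → K`. -/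
abbrev PP (K : Type) [Field K] (n : ℕ) : Type := Projectivization K (Fin n → K)

variable {K : Type} [Field K] {m n : ℕ}

/-- The (at most one) projective point determined by a vector:  empty if `v = 0`,
and the singleton `{[v]}` otherwise. -/
def projPt (v : Fin n → K) : Set (PP K n) :=
  {p | ∃ h : v ≠ 0, p = Projectivization.mk K v h}

/-- The set of projective points lying in a linear subspace. -/
def ptsOf (W : Submodule K (Fin n → K)) : Set (PP K n) :=
  {p | p.rep ∈ W}

/-- The projective line through two points (as the set of points of the span). -/
def lineTh (P Q : PP K n) : Set (PP K n) :=
  ptsOf (Submodule.span K {P.rep, Q.rep})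

/-- `X` is a projective flat of projective dimension `d`. -/
def IsFlat (d : ℕ) (X : Set (PP K n)) : Prop :=
  ∃ W : Submodule K (Fin n → K), Module.finrank K W = d + 1 ∧ X = ptsOf W

/-- Image of a set of vectors under the projective map induced by a matrix. -/
def mimg (M : Matrix (Fin m) (Fin n) K) (X : Set (Fin n → K)) : Set (PP K m) :=
  {p | ∃ v ∈ X, p ∈ projPt (M.mulVec v)}

/-- Coordinatewise application of a ring homomorphism to a vector. -/
def mapVec {L : Type} [Field L] (σ : K →+* L) (v : Fin n → K) : Fin n → L :=
  fun i => σ (v i)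

lemma mulVec_inj (M : Matrix (Fin n) (Fin n) K) (hM : IsUnit M.det) :
    Function.Injective M.mulVec := by
  intro a b hab
  have h := congrArg (fun v => M⁻¹.mulVec v) hab
  simpa [Matrix.mulVec_mulVec, Matrix.nonsing_inv_mul M hM] using h

/-- The projective transformation induced by an invertible matrix. -/
def pmap (M : Matrix (Fin n) (Fin n) K) (hM : IsUnit M.det) (p : PP K n) : PP K n :=
  Projectivization.mk K (M.mulVec p.rep) (by
    intro h
    apply p.rep_nonzero
    have h0 : M.mulVec p.rep = M.mulVec 0 := by simpa [Matrix.mulVec_zero] using h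
    exact mulVec_inj M hM h0)

/-- The map induced on projective points by the coordinatewise `q`-power map. -/
def frobPt (q : ℕ) (p : PP K n) : PP K n :=
  Projectivization.mk K (fun i => p.rep i ^ q) (by
    obtain ⟨i, hi⟩ := Function.ne_iff.mp p.rep_nonzero
    intro h
    exact pow_ne_zero q (by simpa using hi) (by simpa using congrFun h i))

/-- The line at infinity `z = 0` of `PG(2, K)`. -/
def linf (K : Type) [Field K] : Set (PP K 3) := {p | p.rep 2 = 0}

/-- Coordinatewise application of the algebra map to a vector. -/
def algVec (F : Type) {K : Type} [Field F] [Field K] [Algebra F K] {n : ℕ}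
    (v : Fin n → F) : Fin n → K := fun i => algebraMap F K (v i)

/-- Vectors representing the points of the standard Baer subline of `ℓ∞`. -/
def sublineVecs (F K : Type) [Field F] [Field K] [Algebra F K] : Set (Fin 3 → K) :=
  {v | ∃ θ : F, v = ![algebraMap F K θ, 1, 0]} ∪ {![1, 0, 0]}

/-- Nonzero vectors representing the points of `ℓ∞`. -/
def linfVecs (K : Type) [Field K] : Set (Fin 3 → K) := {v | v ≠ 0 ∧ v 2 = 0}

/-- Vectors with all coordinates in (the image of) `F`, representing the canonical
Baer subplane. -/
def subplaneVecs (F K : Type) [Field F] [Field K] [Algebra F K] : Set (Fin 3 → K) :=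
  {v | ∃ w : Fin 3 → F, w ≠ 0 ∧ v = algVec F w}

/-- Vectors of the standard conic with parameters in `S`. -/
def conicVecs {K : Type} [Field K] (S : Set K) : Set (Fin 3 → K) :=
  {v | ∃ θ ∈ S, v = ![1, θ, θ ^ 2]} ∪ {![0, 0, 1]}

/-- `b` is a Baer subline of the line `ℓ` of `PG(2,q²)`. -/
def IsBaerSublineOf (F : Type) {K : Type} [Field F] [Field K] [Algebra F K]
    (b ℓ : Set (PP K 3)) : Prop :=
  ∃ M : Matrix (Fin 3) (Fin 3) K, IsUnit M.det ∧
    ℓ = mimg M (linfVecs K) ∧ b = mimg M (sublineVecs F K)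

/-- `B` is a Baer subplane of `PG(2,q²)`. -/
def IsBaerSubplane (F : Type) {K : Type} [Field F] [Field K] [Algebra F K]
    (B : Set (PP K 3)) : Prop :=
  ∃ M : Matrix (Fin 3) (Fin 3) K, IsUnit M.det ∧ B = mimg M (subplaneVecs F K)

/-- `C` is the image under `PGL(3,K)` of the standard conic with parameters in `S`. -/
def IsConicOver {K : Type} [Field K] (S : Set K) (C : Set (PP K 3)) : Prop :=
  ∃ M : Matrix (Fin 3) (Fin 3) K, IsUnit M.det ∧ C = mimg M (conicVecs S)

/-- An `F_q`-conic of `PG(2,q²)`: a nondegenerate conic of a Baer subplane. -/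
def IsFqConic (F : Type) {K : Type} [Field F] [Field K] [Algebra F K]
    (C : Set (PP K 3)) : Prop :=
  IsConicOver (Set.range (algebraMap F K)) C

/-- An `F_{q²}`-conic of `PG(2,q²)`: a nondegenerate conic. -/
def IsFq2Conic {K : Type} [Field K] (C : Set (PP K 3)) : Prop :=
  IsConicOver (Set.univ : Set K) C

/-- `𝒦` is an `ℓ∞`-Baer pencil with vertex `P`. -/
def IsLinfBaerPencil (F : Type) {K : Type} [Field F] [Field K] [Algebra F K]
    (𝒦 : Set (PP K 3)) (P : PP K 3) : Prop :=
  P ∈ linf K ∧ ∃ ℓ b : Set (PP K 3), IsBaerSublineOf F b ℓ ∧ P ∉ ℓ ∧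
    (∃! X, X ∈ b ∩ linf K) ∧ 𝒦 = ⋃ X ∈ b, lineTh P X

/-- `m` is a line of the Baer subplane `B`, with extension (full line) `ℓ`. -/
def IsLineOfExt {K : Type} [Field K] (q : ℕ) (B m ℓ : Set (PP K 3)) : Prop :=
  IsFlat 1 ℓ ∧ m = B ∩ ℓ ∧ m.ncard = q + 1

/-- `m` is a line of the Baer subplane `B`. -/
def IsLineOf {K : Type} [Field K] (q : ℕ) (B m : Set (PP K 3)) : Prop :=
  ∃ ℓ, IsLineOfExt q B m ℓ

/-- `P` and `Q` are conjugate with respect to the Baer subline `b` of `ℓ∞`. -/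
def ConjWrtSubline (F : Type) {K : Type} [Field F] [Field K] [Algebra F K]
    (q : ℕ) (b : Set (PP K 3)) (P Q : PP K 3) : Prop :=
  ∃ (M : Matrix (Fin 3) (Fin 3) K) (hM : IsUnit M.det),
    mimg M (linfVecs K) = linf K ∧ b = mimg M (sublineVecs F K) ∧
    ∃ P₀ : PP K 3, P = pmap M hM P₀ ∧ Q = pmap M hM (frobPt q P₀)

/-- A representative vector for the point `(δ,1,0)` (resp. `(1,0,0)`) of `ℓ∞`. -/
def ptInfVec {K : Type} [Field K] : Option K → Fin 3 → K
  | some δ => ![δ, 1, 0]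
  | none => ![1, 0, 0]

lemma ptInfVec_ne {K : Type} [Field K] (t : Option K) : ptInfVec t ≠ 0 := by
  cases t with
  | none => intro h; have h0 := congrFun h 0; simp [ptInfVec] at h0
  | some δ => intro h; have h0 := congrFun h 1; simp [ptInfVec] at h0

/-- The point of `ℓ∞` with parameter `δ ∈ K ∪ {∞}`. -/
def ptInf {K : Type} [Field K] (t : Option K) : PP K 3 :=
  Projectivization.mk K (ptInfVec t) (ptInfVec_ne t)

/-- The hyperplane at infinity `z = 0` of `PG(4, F)`. -/
def sinf (F : Type) [Field F] : Set (PP F 5) := {p | p.rep 4 = 0}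

/-- Affine coordinates of the Bruck-Bose image of an affine point of `PG(2,q²)`. -/
def bbVec {F K : Type} [Field F] [Field K] (c0 c1 : K → F) (p : PP K 3) : Fin 5 → F :=
  ![c0 (p.rep 0 / p.rep 2), c1 (p.rep 0 / p.rep 2),
    c0 (p.rep 1 / p.rep 2), c1 (p.rep 1 / p.rep 2), 1]

/-- The Bruck-Bose map (meaningful on affine points of `PG(2,q²)`). -/
def bb {F K : Type} [Field F] [Field K] (c0 c1 : K → F) (p : PP K 3) : PP F 5 :=
  Projectivization.mk F (bbVec c0 c1 p) (by
    intro h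
    have h4 := congrFun h 4
    simp [bbVec] at h4)

/-- First spanning vector of the spread line with parameter `δ ∈ K ∪ {∞}`. -/
def spreadV1 {F K : Type} [Field F] [Field K] (c0 c1 : K → F) : Option K → Fin 5 → F
  | some δ => ![c0 δ, c1 δ, 1, 0, 0]
  | none => ![1, 0, 0, 0, 0]

/-- Second spanning vector of the spread line with parameter `δ ∈ K ∪ {∞}`. -/
def spreadV2 {F K : Type} [Field F] [Field K] (c0 c1 : K → F) (t0 t1 : F) :
    Option K → Fin 5 → F
  | some δ => ![t0 * c1 δ, c0 δ + t1 * c1 δ, 0, 1, 0]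
  | none => ![0, 1, 0, 0, 0]

/-- The line of the regular spread `S` with parameter `δ ∈ K ∪ {∞}`. -/
def spreadLine {F K : Type} [Field F] [Field K] (c0 c1 : K → F) (t0 t1 : F)
    (t : Option K) : Set (PP F 5) :=
  ptsOf (Submodule.span F {spreadV1 c0 c1 t, spreadV2 c0 c1 t0 t1 t})

/-- The extension `[T]⋆` of a spread line to `PG(4,q²)`. -/
def extSpreadLine (F : Type) {K : Type} [Field F] [Field K] [Algebra F K]
    (c0 c1 : K → F) (t0 t1 : F) (t : Option K) : Set (PP K 5) :=
  ptsOf (Submodule.span K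
    {algVec F (spreadV1 c0 c1 t), algVec F (spreadV2 c0 c1 t0 t1 t)})

/-- The `K`-extension of an `F`-subspace. -/
def extSub (F : Type) {K : Type} [Field F] [Field K] [Algebra F K] {n : ℕ}
    (W : Submodule F (Fin n → F)) : Submodule K (Fin n → K) :=
  Submodule.span K (algVec F '' (W : Set (Fin n → F)))

def A0v {K : Type} [Field K] (τ : K) (q : ℕ) : Fin 5 → K := ![τ ^ q, -1, 0, 0, 0]
def A1v {K : Type} [Field K] (τ : K) (q : ℕ) : Fin 5 → K := ![0, 0, τ ^ q, -1, 0]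
def B0v {K : Type} [Field K] (τ : K) : Fin 5 → K := ![τ, -1, 0, 0, 0]
def B1v {K : Type} [Field K] (τ : K) : Fin 5 → K := ![0, 0, τ, -1, 0]

/-- The transversal line `g` of the regular spread, in `PG(4,q²)`. -/
def gline {K : Type} [Field K] (τ : K) (q : ℕ) : Set (PP K 5) :=
  ptsOf (Submodule.span K {A0v τ q, A1v τ q})

/-- The conjugate transversal line `g^q` of the regular spread, in `PG(4,q²)`. -/
def gqline {K : Type} [Field K] (τ : K) : Set (PP K 5) :=
  ptsOf (Submodule.span K {B0v τ, B1v τ})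

/-- Representative vector of the point `T = δA₀ + A₁` of `g`. -/
def gptVec {K : Type} [Field K] (τ : K) (q : ℕ) : Option K → Fin 5 → K
  | some δ => δ • A0v τ q + A1v τ q
  | none => A0v τ q

/-- Representative vector of the conjugate point `T^q = δ^q A₀^q + A₁^q` of `g^q`. -/
def gqptVec {K : Type} [Field K] (τ : K) (q : ℕ) : Option K → Fin 5 → K
  | some δ => δ ^ q • B0v τ + B1v τ
  | none => B0v τ

lemma gptVec_ne {K : Type} [Field K] (τ : K) (q : ℕ) (t : Option K) :
    gptVec τ q t ≠ 0 := by
  cases t with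
  | none =>
      intro h
      have := congrFun h 1
      simp [gptVec, A0v] at this
  | some δ =>
      intro h
      have := congrFun h 3
      simp [gptVec, A0v, A1v] at this

lemma gqptVec_ne {K : Type} [Field K] (τ : K) (q : ℕ) (t : Option K) :
    gqptVec τ q t ≠ 0 := by
  cases t with
  | none =>
      intro h
      have := congrFun h 1
      simp [gqptVec, B0v] at this
  | some δ =>
      intro h
      have := congrFun h 3
      simp [gqptVec, B0v, B1v] at this

/-- The point of `g` corresponding to the point of `ℓ∞` with parameter `δ ∈ K ∪ {∞}`. -/
def gpt {K : Type} [Field K] (τ : K) (q : ℕ) (t : Option K) : PP K 5 :=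
  Projectivization.mk K (gptVec τ q t) (gptVec_ne τ q t)

/-- The point of `g^q` conjugate to `gpt τ q t`. -/
def gqpt {K : Type} [Field K] (τ : K) (q : ℕ) (t : Option K) : PP K 5 :=
  Projectivization.mk K (gqptVec τ q t) (gqptVec_ne τ q t)

/-- Evaluation of the quadratic form with matrix `M` at `v`. -/
def qeval {K : Type} [Field K] {n : ℕ} (M : Matrix (Fin n) (Fin n) K) (v : Fin n → K) : K :=
  v ⬝ᵥ M.mulVec v

/-- Vectors of the standard twisted cubic (inside the hyperplane `x₄ = 0`)
with parameters in `S`. -/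
def tcVecs {K : Type} [Field K] (S : Set K) : Set (Fin 5 → K) :=
  {v | ∃ θ ∈ S, v = ![1, θ, θ ^ 2, θ ^ 3, 0]} ∪ {![0, 0, 0, 1, 0]}

/-- Vectors of the standard 4-dimensional normal rational curve with parameters in `S`. -/
def nrcVecs {K : Type} [Field K] (S : Set K) : Set (Fin 5 → K) :=
  {v | ∃ θ ∈ S, v = ![1, θ, θ ^ 2, θ ^ 3, θ ^ 4]} ∪ {![0, 0, 0, 0, 1]}

/-- `R` is a regulus of `Σ∞` in `PG(4,q)`. -/
def IsRegulus {F : Type} [Field F] (q : ℕ) (R : Set (Set (PP F 5))) : Prop :=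
  R.ncard = q + 1 ∧
  (∀ ℓ ∈ R, IsFlat 1 ℓ ∧ ℓ ⊆ sinf F) ∧
  (∀ ℓ ∈ R, ∀ ℓ' ∈ R, ℓ ≠ ℓ' → ℓ ∩ ℓ' = ∅) ∧
  (∀ mℓ : Set (PP F 5), IsFlat 1 mℓ → mℓ ⊆ sinf F →
    (∃ ℓ₁ ∈ R, ∃ ℓ₂ ∈ R, ∃ ℓ₃ ∈ R, ℓ₁ ≠ ℓ₂ ∧ ℓ₁ ≠ ℓ₃ ∧ ℓ₂ ≠ ℓ₃ ∧
      (mℓ ∩ ℓ₁).Nonempty ∧ (mℓ ∩ ℓ₂).Nonempty ∧ (mℓ ∩ ℓ₃).Nonempty) →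
    ∀ ℓ ∈ R, (mℓ ∩ ℓ).Nonempty)

/-!
In the coordinates `w ↦ (gCoord τ w, gCoord τ^q w) ∈ K² × K²` of `Σ∞⋆`, the line `g` is `K² × 0`,
`g^q` is `0 × K²`, and `[T]⋆` is the join `⟨x⟩ × ⟨x^q⟩` of `T` and `T^q`, where `x ∈ K²` represents
`T̄`. As `ρ` stabilizes `ℓ∞`, it acts there by some `N ∈ GL(2, K)`: the lines `[T]⋆`, `T̄ ∈ b`, are
`⟨Nξ⟩ × ⟨N^q ξ⟩` with `ξ ∈ F²`, and conjugacy means `P̄ = ⟨N y⟩`, `Q̄ = ⟨N y^q⟩`, so that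
`PQ^q = ⟨N y⟩ × ⟨N^q y⟩` and `P^qQ = ⟨N y^q⟩ × ⟨N^q y^q⟩`. All of these are lines
`⟨N z⟩ × ⟨N^q z⟩` of one regulus, and a line meeting three of them meets every one: if it contains
`(sᵢ Nξᵢ, tᵢ N^q ξᵢ)` for three pairwise independent `ξᵢ`, writing the third point through the other
two forces the pairs `(sᵢ, tᵢ)` to be proportional, so the line is `{(s N z, t N^q z) : z ∈ K²}`.
-/

end BaerConics

section Regulus

variable {K V₀ V V' : Type*} [Field K] [AddCommGroup V₀] [Module K V₀] [AddCommGroup V] [Module K V]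
  [AddCommGroup V'] [Module K V']

lemma LinearIndependent.eq_zero_of_smul_eq_smul {x y : V₀} (h : LinearIndependent K ![x, y])
    {a b : K} (hab : a • x = b • y) : a = 0 ∧ b = 0 := by
  have := LinearIndependent.pair_iff.1 h a (-b) (by rw [hab, neg_smul, add_neg_cancel])
  exact ⟨this.1, neg_eq_zero.1 this.2⟩

lemma LinearIndependent.mul_eq_mul_of_smul_eq {ξa ξb ξc : V₀}
    (h : LinearIndependent K ![ξa, ξb]) {s t a b a' b' : K}
    (hs : s • ξc = a • ξa + b • ξb) (ht : t • ξc = a' • ξa + b' • ξb) :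
    a * t = a' * s ∧ b * t = b' * s := by
  have := LinearIndependent.pair_iff.1 h (a * t - a' * s) (b * t - b' * s) (by
    linear_combination (norm := module) s • ht - t • hs)
  exact ⟨sub_eq_zero.1 this.1, sub_eq_zero.1 this.2⟩

lemma exists_eq_mul_of_mul_eq_mul {a b c d : K} (hab : (a, b) ≠ 0) (h : a * d = b * c) :
    ∃ l : K, c = l * a ∧ d = l * b := by
  by_cases ha : a = 0
  · have hb : b ≠ 0 := fun hb => hab (by simp [ha, hb])
    refine ⟨d / b, ?_, by field_simp⟩
    simp_all
  · exact ⟨c / a, by field_simp, by field_simp; linear_combination h⟩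

theorem exists_smul_smul_mem_of_three {A : V₀ →ₗ[K] V} {B : V₀ →ₗ[K] V'}
    (hA : Function.Injective A) (hB : Function.Injective B)
    {U : Submodule K (V × V')} [FiniteDimensional K U] (hU : Module.finrank K U ≤ 2)
    {ξa ξb ξc : V₀} (hab : LinearIndependent K ![ξa, ξb])
    (hac : LinearIndependent K ![ξa, ξc]) (hbc : LinearIndependent K ![ξb, ξc])
    {sa ta sb tb sc tc : K} (hsta : (sa, ta) ≠ 0) (hstb : (sb, tb) ≠ 0) (hstc : (sc, tc) ≠ 0)
    (ha : (sa • A ξa, ta • B ξa) ∈ U) (hb : (sb • A ξb, tb • B ξb) ∈ U)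
    (hc : (sc • A ξc, tc • B ξc) ∈ U) :
    ∃ s t : K, (s, t) ≠ 0 ∧ ∀ z ∈ Submodule.span K {ξa, ξb}, (s • A z, t • B z) ∈ U := by
  have comb : ∀ α β : K, α • (sa • A ξa, ta • B ξa) + β • (sb • A ξb, tb • B ξb) =
      (A ((α * sa) • ξa + (β * sb) • ξb), B ((α * ta) • ξa + (β * tb) • ξb)) := by
    intro α β; simp [smul_smul]
  have hind : LinearIndependent K ![(sa • A ξa, ta • B ξa), (sb • A ξb, tb • B ξb)] := by
    refine LinearIndependent.pair_iff.2 fun α β h => ?_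
    rw [comb, Prod.mk_eq_zero, map_eq_zero_iff A hA, map_eq_zero_iff B hB] at h
    obtain ⟨hsa, hsb⟩ := LinearIndependent.pair_iff.1 hab _ _ h.1
    obtain ⟨hta, htb⟩ := LinearIndependent.pair_iff.1 hab _ _ h.2
    constructor
    · by_contra hα; exact hsta (by simp_all)
    · by_contra hβ; exact hstb (by simp_all)
  have hspan : Submodule.span K {(sa • A ξa, ta • B ξa), (sb • A ξb, tb • B ξb)} = U := by
    refine Submodule.eq_of_le_of_finrank_le ?_ ?_
    · rw [Submodule.span_le, Set.insert_subset_iff, Set.singleton_subset_iff]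
      exact ⟨ha, hb⟩
    · rw [← Matrix.range_cons_cons_empty, finrank_span_eq_card hind]
      simpa using hU
  obtain ⟨α, β, hαβ⟩ := Submodule.mem_span_pair.1 (hspan ▸ hc)
  rw [comb, Prod.mk.injEq, ← map_smul, ← map_smul] at hαβ
  have hs : sc • ξc = (α * sa) • ξa + (β * sb) • ξb := (hA hαβ.1).symm
  have ht : tc • ξc = (α * ta) • ξa + (β * tb) • ξb := (hB hαβ.2).symm
  have hα : α ≠ 0 := by
    rintro rfl
    simp only [zero_mul, zero_smul, zero_add] at hs ht
    exact hstc (by simp [(hbc.eq_zero_of_smul_eq_smul hs.symm).2,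
      (hbc.eq_zero_of_smul_eq_smul ht.symm).2])
  have hβ : β ≠ 0 := by
    rintro rfl
    simp only [zero_mul, zero_smul, add_zero] at hs ht
    exact hstc (by simp [(hac.eq_zero_of_smul_eq_smul hs.symm).2,
      (hac.eq_zero_of_smul_eq_smul ht.symm).2])
  obtain ⟨hcrossa, hcrossb⟩ := hab.mul_eq_mul_of_smul_eq hs ht
  obtain ⟨la, hsla, htla⟩ := exists_eq_mul_of_mul_eq_mul (c := sc) (d := tc) hsta
    (mul_left_cancel₀ hα (by linear_combination hcrossa))
  obtain ⟨lb, hslb, htlb⟩ := exists_eq_mul_of_mul_eq_mul (c := sc) (d := tc) hstb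
    (mul_left_cancel₀ hβ (by linear_combination hcrossb))
  refine ⟨sc, tc, hstc, fun z hz => ?_⟩
  suffices Submodule.span K {ξa, ξb} ≤ U.comap ((sc • A).prod (tc • B)) from this hz
  rw [Submodule.span_le, Set.insert_subset_iff, Set.singleton_subset_iff]
  constructor
  · simpa [hsla, htla, mul_smul] using U.smul_mem la ha
  · simpa [hslb, htlb, mul_smul] using U.smul_mem lb hb

end Regulus

lemma linearIndependent_pair_of_det_ne_zero {K : Type*} [Field K] {u v : Fin 2 → K}
    (h : u 0 * v 1 - u 1 * v 0 ≠ 0) : LinearIndependent K ![u, v] := by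
  refine LinearIndependent.pair_iff.2 fun s t hst => ?_
  have h0 := congrFun hst 0
  have h1 := congrFun hst 1
  simp only [Pi.add_apply, Pi.smul_apply, smul_eq_mul, Pi.zero_apply] at h0 h1
  exact ⟨(mul_eq_zero.1 (by linear_combination v 1 * h0 - v 0 * h1)).resolve_right h,
    (mul_eq_zero.1 (by linear_combination u 0 * h1 - u 1 * h0)).resolve_right h⟩

namespace FiniteField

lemma frobeniusAlgHom_apply_ne_self {F K : Type*} [Field F] [Field K] [Fintype F] [Fintype K]
    [Algebra F K] {x : K} (hx : x ∉ Set.range (algebraMap F K)) : frobeniusAlgHom F K x ≠ x := by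
  intro h
  refine hx ((IsGalois.mem_range_algebraMap_iff_fixed x).2 fun f => ?_)
  obtain ⟨n, rfl⟩ := (bijective_frobeniusAlgEquivOfAlgebraic_pow F K).2 f
  rw [AlgEquiv.coe_pow]
  exact Function.iterate_fixed h n

lemma frobeniusAlgHom_apply_apply {F K : Type*} [Field F] [Field K] [Fintype F] [Fintype K]
    [Algebra F K] (hK : Fintype.card K = Fintype.card F ^ 2) (x : K) :
    frobeniusAlgHom F K (frobeniusAlgHom F K x) = x := by
  simp only [coe_frobeniusAlgHom]
  rw [← pow_mul, ← sq, ← hK, pow_card]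

end FiniteField

namespace BaerConics

variable {K : Type} [Field K]

lemma mulVec_ne_zero_of_isUnit_det {n : ℕ} {A : Matrix (Fin n) (Fin n) K} (hA : IsUnit A.det)
    {v : Fin n → K} (hv : v ≠ 0) : A *ᵥ v ≠ 0 :=
  fun h => hv (mulVec_inj A hA (by rw [h, Matrix.mulVec_zero]))

lemma exists_rep_mk_eq_smul {n : ℕ} (v : Fin n → K) (hv : v ≠ 0) :
    ∃ c : K, c ≠ 0 ∧ (Projectivization.mk K v hv).rep = c • v := by
  obtain ⟨a, ha⟩ := (Projectivization.mk_eq_mk_iff K _ _ _ _).1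
    (Projectivization.mk_rep (Projectivization.mk K v hv))
  exact ⟨a, a.ne_zero, ha.symm⟩

lemma mk_mem_ptsOf_iff {n : ℕ} {W : Submodule K (Fin n → K)} {v : Fin n → K} (hv : v ≠ 0) :
    Projectivization.mk K v hv ∈ ptsOf W ↔ v ∈ W := by
  obtain ⟨c, hc, hrep⟩ := exists_rep_mk_eq_smul v hv
  change _ ∈ W ↔ _
  rw [hrep, Submodule.smul_mem_iff _ hc]

lemma ptsOf_inter_ptsOf_nonempty_iff {n : ℕ} {W S : Submodule K (Fin n → K)} :
    (ptsOf W ∩ ptsOf S).Nonempty ↔ W ⊓ S ≠ ⊥ := by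
  rw [Submodule.ne_bot_iff]
  constructor
  · rintro ⟨p, hpW, hpS⟩
    exact ⟨p.rep, ⟨hpW, hpS⟩, p.rep_nonzero⟩
  · rintro ⟨v, ⟨hvW, hvS⟩, hv⟩
    exact ⟨Projectivization.mk K v hv, (mk_mem_ptsOf_iff hv).2 hvW, (mk_mem_ptsOf_iff hv).2 hvS⟩

lemma lineTh_mk_mk {n : ℕ} {v w : Fin n → K} (hv : v ≠ 0) (hw : w ≠ 0) :
    lineTh (Projectivization.mk K v hv) (Projectivization.mk K w hw) =
      ptsOf (Submodule.span K {v, w}) := by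
  obtain ⟨c, hc, hcv⟩ := exists_rep_mk_eq_smul v hv
  obtain ⟨d, hd, hdw⟩ := exists_rep_mk_eq_smul w hw
  rw [lineTh, hcv, hdw, Submodule.span_insert, Submodule.span_insert,
    Submodule.span_singleton_smul_eq (IsUnit.mk0 c hc),
    Submodule.span_singleton_smul_eq (IsUnit.mk0 d hd)]

lemma lineTh_comm {n : ℕ} (P Q : PP K n) : lineTh P Q = lineTh Q P := by
  rw [lineTh, lineTh, Set.pair_comm]

/-- For `w = (x₀, x₁, y₀, y₁, 0)` with `xᵢ, yᵢ ∈ F` this is the point `(x₀ + x₁τ, y₀ + y₁τ)` of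
`ℓ∞` whose spread line contains `w`; on `Σ∞⋆` the kernel of `gCoord τ` is `g^q` and that of
`gCoord τ^q` is `g`. -/
def gCoord (τ : K) : (Fin 5 → K) →ₗ[K] Fin 2 → K where
  toFun w := ![w 0 + τ * w 1, w 2 + τ * w 3]
  map_add' v w := by ext i; fin_cases i <;> simp <;> ring
  map_smul' c w := by ext i; fin_cases i <;> simp <;> ring

lemma gCoord_apply (τ : K) (w : Fin 5 → K) : gCoord τ w = ![w 0 + τ * w 1, w 2 + τ * w 3] :=
  rfl

lemma eq_zero_of_gCoord_eq_zero {τ τ' : K} (hτ : τ ≠ τ') {w : Fin 5 → K} (h4 : w 4 = 0)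
    (h : gCoord τ w = 0) (h' : gCoord τ' w = 0) : w = 0 := by
  have e0 := congrFun h 0
  have e1 := congrFun h 1
  have e0' := congrFun h' 0
  have e1' := congrFun h' 1
  simp only [gCoord_apply, Matrix.cons_val_zero, Matrix.cons_val_one, Pi.zero_apply]
    at e0 e1 e0' e1'
  have hs : τ - τ' ≠ 0 := sub_ne_zero.2 hτ
  have w1 : w 1 = 0 := (mul_eq_zero.1 (by linear_combination e0 - e0')).resolve_left hs
  have w3 : w 3 = 0 := (mul_eq_zero.1 (by linear_combination e1 - e1')).resolve_left hs
  have w0 : w 0 = 0 := by linear_combination e0 - τ * w1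
  have w2 : w 2 = 0 := by linear_combination e1 - τ * w3
  ext i; fin_cases i <;> assumption

/-- For `τ' = τ^q`: the line of `Σ∞⋆` joining the point of `g` on which `gCoord τ` lies in `⟨x⟩`
to the point of `g^q` on which `gCoord τ'` lies in `⟨x'⟩`; e.g. `[T]⋆` is the join of `T` and
`T^q`. -/
def joinLine (τ τ' : K) (x x' : Fin 2 → K) : Submodule K (Fin 5 → K) :=
  LinearMap.ker (LinearMap.proj 4) ⊓ (K ∙ x).comap (gCoord τ) ⊓ (K ∙ x').comap (gCoord τ')

lemma mem_joinLine {τ τ' : K} {x x' : Fin 2 → K} {w : Fin 5 → K} :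
    w ∈ joinLine τ τ' x x' ↔ w 4 = 0 ∧ gCoord τ w ∈ K ∙ x ∧ gCoord τ' w ∈ K ∙ x' := by
  simp [joinLine, and_assoc]

lemma joinLine_smul_smul (τ τ' : K) {c c' : K} (hc : c ≠ 0) (hc' : c' ≠ 0) (x x' : Fin 2 → K) :
    joinLine τ τ' (c • x) (c' • x') = joinLine τ τ' x x' := by
  rw [joinLine, Submodule.span_singleton_smul_eq (IsUnit.mk0 c hc),
    Submodule.span_singleton_smul_eq (IsUnit.mk0 c' hc'), joinLine]

lemma inf_joinLine_ne_bot_iff {τ τ' : K} (hτ : τ ≠ τ') {x x' : Fin 2 → K} (hx : x ≠ 0)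
    (hx' : x' ≠ 0) {W : Submodule K (Fin 5 → K)} :
    W ⊓ joinLine τ τ' x x' ≠ ⊥ ↔ ∃ s t : K, (s, t) ≠ 0 ∧ (s • x, t • x') ∈
      (W ⊓ LinearMap.ker (LinearMap.proj 4)).map ((gCoord τ).prod (gCoord τ')) := by
  rw [Submodule.ne_bot_iff]
  constructor
  · rintro ⟨w, ⟨hwW, hwJ⟩, hw⟩
    obtain ⟨h4, hs, ht⟩ := mem_joinLine.1 hwJ
    obtain ⟨s, hs⟩ := Submodule.mem_span_singleton.1 hs
    obtain ⟨t, ht⟩ := Submodule.mem_span_singleton.1 ht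
    refine ⟨s, t, fun hst => hw ?_, w, ⟨hwW, h4⟩, by simp [hs, ht]⟩
    obtain ⟨rfl, rfl⟩ := Prod.mk_eq_zero.1 hst
    exact eq_zero_of_gCoord_eq_zero hτ h4 (by rw [← hs, zero_smul]) (by rw [← ht, zero_smul])
  · rintro ⟨s, t, hst, w, ⟨hwW, h4⟩, hw⟩
    obtain ⟨hs, ht⟩ := Prod.mk.injEq _ _ _ _ ▸ hw
    refine ⟨w, ⟨hwW, mem_joinLine.2 ⟨h4, ?_, ?_⟩⟩, ?_⟩
    · exact hs ▸ Submodule.smul_mem _ s (Submodule.mem_span_singleton_self x)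
    · exact ht ▸ Submodule.smul_mem _ t (Submodule.mem_span_singleton_self x')
    · rintro rfl
      simp only [map_zero] at hs ht
      exact hst (Prod.mk_eq_zero.2 ⟨(smul_eq_zero.1 hs.symm).resolve_right hx,
        (smul_eq_zero.1 ht.symm).resolve_right hx'⟩)

theorem inf_joinLine_ne_bot_of_three {τ τ' : K} (hτ : τ ≠ τ')
    {N N' : Matrix (Fin 2) (Fin 2) K} (hN : IsUnit N.det) (hN' : IsUnit N'.det)
    {W : Submodule K (Fin 5 → K)} (hW : Module.finrank K W ≤ 2) {ξa ξb ξc : Fin 2 → K}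
    (hab : LinearIndependent K ![ξa, ξb]) (hac : LinearIndependent K ![ξa, ξc])
    (hbc : LinearIndependent K ![ξb, ξc])
    (ha : W ⊓ joinLine τ τ' (N *ᵥ ξa) (N' *ᵥ ξa) ≠ ⊥)
    (hb : W ⊓ joinLine τ τ' (N *ᵥ ξb) (N' *ᵥ ξb) ≠ ⊥)
    (hc : W ⊓ joinLine τ τ' (N *ᵥ ξc) (N' *ᵥ ξc) ≠ ⊥) {z : Fin 2 → K} (hz : z ≠ 0) :
    W ⊓ joinLine τ τ' (N *ᵥ z) (N' *ᵥ z) ≠ ⊥ := by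
  have hiff := fun {v : Fin 2 → K} (hv : v ≠ 0) => inf_joinLine_ne_bot_iff (W := W) hτ
    (mulVec_ne_zero_of_isUnit_det hN hv) (mulVec_ne_zero_of_isUnit_det hN' hv)
  obtain ⟨sa, ta, hsta, hma⟩ := (hiff (hab.ne_zero 0)).1 ha
  obtain ⟨sb, tb, hstb, hmb⟩ := (hiff (hab.ne_zero 1)).1 hb
  obtain ⟨sc, tc, hstc, hmc⟩ := (hiff (hac.ne_zero 1)).1 hc
  obtain ⟨s, t, hst, hU⟩ := exists_smul_smul_mem_of_three (A := N.mulVecLin) (B := N'.mulVecLin)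
    (mulVec_inj N hN) (mulVec_inj N' hN')
    ((Submodule.finrank_map_le _ _).trans ((Submodule.finrank_mono inf_le_left).trans hW))
    hab hac hbc hsta hstb hstc hma hmb hmc
  have htop : Submodule.span K {ξa, ξb} = ⊤ := by
    rw [← Matrix.range_cons_cons_empty]
    exact hab.span_eq_top_of_card_eq_finrank' (by simp)
  exact (hiff hz).2 ⟨s, t, hst, hU z (htop ▸ Submodule.mem_top)⟩

def pvec : Option K → Fin 2 → K
  | some δ => ![δ, 1]
  | none => ![1, 0]

lemma ptInfVec_eq (t : Option K) : ptInfVec t = ![pvec t 0, pvec t 1, 0] := by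
  cases t <;> rfl

lemma exists_pvec_eq_smul {z : Fin 2 → K} (hz : z ≠ 0) :
    ∃ (t : Option K) (c : K), c ≠ 0 ∧ pvec t = c • z := by
  by_cases h1 : z 1 = 0
  · have h0 : z 0 ≠ 0 := fun h0 => hz (by ext i; fin_cases i <;> assumption)
    exact ⟨none, (z 0)⁻¹, inv_ne_zero h0, by ext i; fin_cases i <;> simp [pvec, h1, h0]⟩
  · exact ⟨some (z 0 / z 1), (z 1)⁻¹, inv_ne_zero h1, by
      ext i; fin_cases i <;> simp [pvec, h1, div_eq_inv_mul]⟩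

lemma mapVec_smul {n : ℕ} (φ : K →+* K) (c : K) (v : Fin n → K) :
    mapVec φ (c • v) = φ c • mapVec φ v := by
  ext i; simp [mapVec]

lemma mapVec_mulVec (φ : K →+* K) (N : Matrix (Fin 2) (Fin 2) K) (v : Fin 2 → K) :
    mapVec φ (N *ᵥ v) = N.map φ *ᵥ mapVec φ v := by
  ext i; exact RingHom.map_mulVec φ N v i

section Spread

variable {F : Type} [Field F] [Algebra F K] {τ : K} {t0 t1 : F} {c0 c1 : K → F}

lemma gCoord_spreadV1 {σ : K →+* K} (hσ : ∀ a : F, σ (algebraMap F K a) = algebraMap F K a)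
    (hc : ∀ x : K, x = algebraMap F K (c0 x) + algebraMap F K (c1 x) * τ) (t : Option K) :
    gCoord (σ τ) (algVec F (spreadV1 c0 c1 t)) = mapVec σ (pvec t) := by
  cases t with
  | none => ext i; fin_cases i <;> simp [gCoord_apply, algVec, spreadV1, mapVec, pvec]
  | some δ =>
    have hδ := congrArg σ (hc δ)
    rw [map_add, map_mul, hσ, hσ] at hδ
    ext i; fin_cases i <;> simp [gCoord_apply, algVec, spreadV1, mapVec, pvec]
    linear_combination -hδ

lemma gCoord_spreadV2 {σ : K →+* K} (hσ : ∀ a : F, σ (algebraMap F K a) = algebraMap F K a)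
    (hτ : τ ^ 2 = algebraMap F K t1 * τ + algebraMap F K t0)
    (hc : ∀ x : K, x = algebraMap F K (c0 x) + algebraMap F K (c1 x) * τ) (t : Option K) :
    gCoord (σ τ) (algVec F (spreadV2 c0 c1 t0 t1 t)) = σ τ • mapVec σ (pvec t) := by
  cases t with
  | none => ext i; fin_cases i <;> simp [gCoord_apply, algVec, spreadV2, mapVec, pvec]
  | some δ =>
    have hδ := congrArg σ (hc δ)
    have hτσ := congrArg σ hτ
    rw [map_add, map_mul, hσ, hσ] at hδ
    rw [map_pow, map_add, map_mul, hσ, hσ] at hτσ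
    ext i; fin_cases i <;> simp [gCoord_apply, algVec, spreadV2, mapVec, pvec]
    linear_combination -(σ τ * hδ) - algebraMap F K (c1 δ) * hτσ

lemma span_spread_le_joinLine {φ : K →+* K}
    (hφ : ∀ a : F, φ (algebraMap F K a) = algebraMap F K a)
    (hτ : τ ^ 2 = algebraMap F K t1 * τ + algebraMap F K t0)
    (hc : ∀ x : K, x = algebraMap F K (c0 x) + algebraMap F K (c1 x) * τ) (t : Option K) :
    Submodule.span K {algVec F (spreadV1 c0 c1 t), algVec F (spreadV2 c0 c1 t0 t1 t)} ≤
      joinLine τ (φ τ) (pvec t) (mapVec φ (pvec t)) := by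
  have hid : ∀ a : F, RingHom.id K (algebraMap F K a) = algebraMap F K a := fun _ => rfl
  rw [Submodule.span_le, Set.insert_subset_iff, Set.singleton_subset_iff]
  refine ⟨mem_joinLine.2 ⟨?_, ?_, ?_⟩, mem_joinLine.2 ⟨?_, ?_, ?_⟩⟩
  · cases t <;> simp [algVec, spreadV1]
  · exact (gCoord_spreadV1 hid hc t).symm ▸ Submodule.mem_span_singleton_self _
  · exact (gCoord_spreadV1 hφ hc t).symm ▸ Submodule.mem_span_singleton_self _
  · cases t <;> simp [algVec, spreadV2]
  · exact (gCoord_spreadV2 hid hτ hc t).symm ▸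
      Submodule.smul_mem _ _ (Submodule.mem_span_singleton_self _)
  · exact (gCoord_spreadV2 hφ hτ hc t).symm ▸
      Submodule.smul_mem _ _ (Submodule.mem_span_singleton_self _)

lemma inf_joinLine_ne_bot_of_meets_extSpreadLine {φ : K →+* K}
    (hφ : ∀ a : F, φ (algebraMap F K a) = algebraMap F K a)
    (hτ : τ ^ 2 = algebraMap F K t1 * τ + algebraMap F K t0)
    (hc : ∀ x : K, x = algebraMap F K (c0 x) + algebraMap F K (c1 x) * τ)
    {W : Submodule K (Fin 5 → K)} {t : Option K}
    (hW : (ptsOf W ∩ extSpreadLine F c0 c1 t0 t1 t).Nonempty)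
    {N : Matrix (Fin 2) (Fin 2) K} {ξ : Fin 2 → K} {c : K} (hc0 : c ≠ 0)
    (ht : pvec t = c • N *ᵥ ξ) (hξ : mapVec φ ξ = ξ) :
    W ⊓ joinLine τ (φ τ) (N *ᵥ ξ) (N.map φ *ᵥ ξ) ≠ ⊥ := by
  have h := ne_bot_of_le_ne_bot (ptsOf_inter_ptsOf_nonempty_iff.1 hW)
    (inf_le_inf_left W (span_spread_le_joinLine hφ hτ hc t))
  rwa [ht, mapVec_smul, mapVec_mulVec, hξ,
    joinLine_smul_smul _ _ hc0 ((map_ne_zero φ).2 hc0)] at h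

end Spread

section Transversal

variable {τ : K} {q : ℕ}

lemma gCoord_gptVec (t : Option K) : gCoord τ (gptVec τ q t) = (τ ^ q - τ) • pvec t := by
  cases t <;> ext i <;> fin_cases i <;> simp [gCoord_apply, gptVec, A0v, A1v, pvec] <;> ring

lemma gCoord_pow_gptVec (t : Option K) : gCoord (τ ^ q) (gptVec τ q t) = 0 := by
  cases t <;> ext i <;> fin_cases i <;> simp [gCoord_apply, gptVec, A0v, A1v, mul_comm]

lemma gCoord_gqptVec (t : Option K) : gCoord τ (gqptVec τ q t) = 0 := by
  cases t <;> ext i <;> fin_cases i <;> simp [gCoord_apply, gqptVec, B0v, B1v, mul_comm]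

lemma gCoord_pow_gqptVec {φ : K →+* K} (hφ : ∀ x, φ x = x ^ q) (t : Option K) :
    gCoord (τ ^ q) (gqptVec τ q t) = (τ - τ ^ q) • mapVec φ (pvec t) := by
  cases t with
  | none => ext i; fin_cases i <;> simp [gCoord_apply, gqptVec, B0v, mapVec, pvec, sub_eq_add_neg]
  | some δ =>
    ext i; fin_cases i <;> simp [gCoord_apply, gqptVec, B0v, B1v, mapVec, pvec, hφ] <;> ring

lemma joinLine_le_span_gptVec_gqptVec {φ : K →+* K} (hφ : ∀ x, φ x = x ^ q) (hτ : φ τ ≠ τ)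
    (t t' : Option K) :
    joinLine τ (φ τ) (pvec t) (mapVec φ (pvec t')) ≤
      Submodule.span K {gptVec τ q t, gqptVec τ q t'} := by
  intro w hw
  rw [hφ] at hw hτ
  obtain ⟨h4, ha, hb⟩ := mem_joinLine.1 hw
  obtain ⟨a, ha⟩ := Submodule.mem_span_singleton.1 ha
  obtain ⟨b, hb⟩ := Submodule.mem_span_singleton.1 hb
  have hs : τ ^ q - τ ≠ 0 := sub_ne_zero.2 hτ
  have hs' : τ - τ ^ q ≠ 0 := sub_ne_zero.2 hτ.symm
  refine Submodule.mem_span_pair.2 ⟨a / (τ ^ q - τ), b / (τ - τ ^ q), ?_⟩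
  refine (sub_eq_zero.1 (eq_zero_of_gCoord_eq_zero hτ.symm ?_ ?_ ?_)).symm
  · cases t <;> cases t' <;> simp [gptVec, gqptVec, A0v, A1v, B0v, B1v, h4]
  · rw [map_sub, map_add, map_smul, map_smul, gCoord_gptVec, gCoord_gqptVec, ← ha, smul_zero,
      add_zero, smul_smul, div_mul_cancel₀ _ hs, sub_self]
  · rw [map_sub, map_add, map_smul, map_smul, gCoord_pow_gptVec, gCoord_pow_gqptVec hφ, ← hb,
      smul_zero, zero_add, smul_smul, div_mul_cancel₀ _ hs', sub_self]

end Transversal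

section Conjugate

variable {M : Matrix (Fin 3) (Fin 3) K}

lemma lowerRow_eq_zero_of_mimg_subset_linf (hM : IsUnit M.det) (h : mimg M (linfVecs K) ⊆ linf K) :
    M 2 0 = 0 ∧ M 2 1 = 0 := by
  have key : ∀ v ∈ linfVecs K, (M *ᵥ v) 2 = 0 := fun v hv => by
    have hMv := mulVec_ne_zero_of_isUnit_det hM hv.1
    have hmem : (Projectivization.mk K _ hMv).rep 2 = 0 := h ⟨v, hv, hMv, rfl⟩
    obtain ⟨c, hc, hrep⟩ := exists_rep_mk_eq_smul _ hMv
    simpa [hrep, hc] using hmem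
  constructor
  · simpa [Matrix.mulVec, dotProduct, Fin.sum_univ_three] using
      key ![1, 0, 0] ⟨by simp [funext_iff, Fin.forall_fin_succ], rfl⟩
  · simpa [Matrix.mulVec, dotProduct, Fin.sum_univ_three] using
      key ![0, 1, 0] ⟨by simp [funext_iff, Fin.forall_fin_succ], rfl⟩

lemma mulVec_of_lowerRow_eq_zero (h20 : M 2 0 = 0) (h21 : M 2 1 = 0) (x : Fin 2 → K) :
    M *ᵥ ![x 0, x 1, 0] =
      ![(M.submatrix Fin.castSucc Fin.castSucc *ᵥ x) 0,
        (M.submatrix Fin.castSucc Fin.castSucc *ᵥ x) 1, 0] := by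
  ext i; fin_cases i <;> simp [Matrix.mulVec, dotProduct, Fin.sum_univ_three, h20, h21]

lemma mulVec_apply_two (h20 : M 2 0 = 0) (h21 : M 2 1 = 0) (r : Fin 3 → K) :
    (M *ᵥ r) 2 = M 2 2 * r 2 := by
  simp [Matrix.mulVec, dotProduct, Fin.sum_univ_three, h20, h21]

lemma det_eq_mul_det_submatrix (h20 : M 2 0 = 0) (h21 : M 2 1 = 0) :
    M.det = M 2 2 * (M.submatrix Fin.castSucc Fin.castSucc).det := by
  simp [Matrix.det_fin_three, Matrix.det_fin_two, h20, h21]; ring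

lemma pvec_eq_smul_of_smul_mulVec_eq (h20 : M 2 0 = 0) (h21 : M 2 1 = 0) (h22 : M 2 2 ≠ 0)
    {c : K} (hc : c ≠ 0) {r : Fin 3 → K} {t : Option K} (h : c • (M *ᵥ r) = ptInfVec t) :
    r 2 = 0 ∧ pvec t = c • M.submatrix Fin.castSucc Fin.castSucc *ᵥ ![r 0, r 1] := by
  have hr2 : r 2 = 0 := by
    simpa [ptInfVec_eq, mulVec_apply_two h20 h21, hc, h22] using congrFun h 2
  have hr : r = ![(![r 0, r 1] : Fin 2 → K) 0, ![r 0, r 1] 1, 0] := by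
    ext i; fin_cases i <;> simp [hr2]
  rw [hr, mulVec_of_lowerRow_eq_zero h20 h21, ptInfVec_eq] at h
  refine ⟨hr2, ?_⟩
  ext i; fin_cases i
  · simpa using (congrFun h 0).symm
  · simpa using (congrFun h 1).symm

lemma exists_ptInf_mem_mimg (hM : IsUnit M.det) (h20 : M 2 0 = 0) (h21 : M 2 1 = 0)
    {X : Set (Fin 3 → K)} {ξ : Fin 2 → K} (hξX : ![ξ 0, ξ 1, 0] ∈ X) (hξ : ξ ≠ 0) :
    ∃ t, ptInf t ∈ mimg M X ∧
      ∃ c : K, c ≠ 0 ∧ pvec t = c • M.submatrix Fin.castSucc Fin.castSucc *ᵥ ξ := by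
  have hN : IsUnit (M.submatrix Fin.castSucc Fin.castSucc).det :=
    isUnit_of_mul_isUnit_right (det_eq_mul_det_submatrix h20 h21 ▸ hM)
  obtain ⟨t, c, hc, hpt⟩ := exists_pvec_eq_smul (mulVec_ne_zero_of_isUnit_det hN hξ)
  have hv : ![ξ 0, ξ 1, 0] ≠ 0 := fun h => hξ (by
    ext i; fin_cases i; exacts [congrFun h 0, congrFun h 1])
  refine ⟨t, ⟨_, hξX, mulVec_ne_zero_of_isUnit_det hM hv, ?_⟩, c, hc, hpt⟩
  refine (Projectivization.mk_eq_mk_iff' K _ _ _ _).2 ⟨c, ?_⟩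
  rw [mulVec_of_lowerRow_eq_zero h20 h21, ptInfVec_eq, hpt]
  ext i; fin_cases i <;> simp

theorem ConjWrtSubline.exists_coords {F : Type} [Field F] [Algebra F K] {q : ℕ}
    {φ : K →+* K} (hφ : ∀ x, φ x = x ^ q) {b : Set (PP K 3)} {tP tQ : Option K}
    (h : ConjWrtSubline F q b (ptInf tP) (ptInf tQ)) :
    ∃ N : Matrix (Fin 2) (Fin 2) K, IsUnit N.det ∧
      (∀ ξ : Fin 2 → K, ![ξ 0, ξ 1, 0] ∈ sublineVecs F K → ξ ≠ 0 →
        ∃ t, ptInf t ∈ b ∧ ∃ c : K, c ≠ 0 ∧ pvec t = c • N *ᵥ ξ) ∧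
      ∃ y : Fin 2 → K, y ≠ 0 ∧ (∃ c : K, c ≠ 0 ∧ pvec tP = c • N *ᵥ y) ∧
        ∃ c : K, c ≠ 0 ∧ pvec tQ = c • N *ᵥ mapVec φ y := by
  obtain ⟨M, hM, hlinf, rfl, P₀, hP, hQ⟩ := h
  obtain ⟨h20, h21⟩ := lowerRow_eq_zero_of_mimg_subset_linf hM hlinf.le
  have hdet := det_eq_mul_det_submatrix h20 h21
  have h22 : M 2 2 ≠ 0 := left_ne_zero_of_mul (hdet ▸ hM.ne_zero)
  refine ⟨_, isUnit_of_mul_isUnit_right (hdet ▸ hM),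
    fun ξ hξX hξ => exists_ptInf_mem_mimg hM h20 h21 hξX hξ, ?_⟩
  obtain ⟨uP, huP⟩ := (Projectivization.mk_eq_mk_iff K _ _ _ _).1 hP
  obtain ⟨hr2, hPy⟩ := pvec_eq_smul_of_smul_mulVec_eq h20 h21 h22 uP.ne_zero huP
  obtain ⟨uQ, huQ⟩ := (Projectivization.mk_eq_mk_iff K _ _ _ _).1 hQ
  obtain ⟨d, hd, hdrep⟩ := exists_rep_mk_eq_smul (fun i => P₀.rep i ^ q)
    fun h => P₀.rep_nonzero (funext fun i => (pow_eq_zero_iff'.1 (congrFun h i)).1)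
  change uQ • M *ᵥ (Projectivization.mk K _ _).rep = _ at huQ
  rw [hdrep, Matrix.mulVec_smul, Units.smul_def, smul_smul] at huQ
  obtain ⟨-, hQy⟩ := pvec_eq_smul_of_smul_mulVec_eq h20 h21 h22 (mul_ne_zero uQ.ne_zero hd) huQ
  refine ⟨![P₀.rep 0, P₀.rep 1], fun hy => P₀.rep_nonzero ?_, ⟨uP, uP.ne_zero, hPy⟩,
    ⟨uQ * d, mul_ne_zero uQ.ne_zero hd, ?_⟩⟩
  · ext i; fin_cases i
    exacts [congrFun hy 0, congrFun hy 1, hr2]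
  · rw [hQy]; congr 2
    ext i; fin_cases i <;> simp [mapVec, hφ]

end Conjugate

lemma mapVec_mapVec {n : ℕ} {φ : K →+* K} (hφ : ∀ x, φ (φ x) = x) (v : Fin n → K) :
    mapVec φ (mapVec φ v) = v := by
  ext i; simp [mapVec, hφ]

lemma mapVec_ne_zero {n : ℕ} (φ : K →+* K) {v : Fin n → K} (hv : v ≠ 0) : mapVec φ v ≠ 0 :=
  fun h => hv (funext fun i => (map_eq_zero φ).1 (congrFun h i))

lemma inter_lineTh_nonempty {q : ℕ} {φ : K →+* K} (hφ : ∀ x, φ x = x ^ q) {τ : K}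
    (hτ : φ τ ≠ τ) {W : Submodule K (Fin 5 → K)} {t t' : Option K}
    (h : W ⊓ joinLine τ (φ τ) (pvec t) (mapVec φ (pvec t')) ≠ ⊥) :
    (ptsOf W ∩ lineTh (gpt τ q t) (gqpt τ q t')).Nonempty := by
  rw [gpt, gqpt, lineTh_mk_mk, ptsOf_inter_ptsOf_nonempty_iff]
  exact ne_bot_of_le_ne_bot h (inf_le_inf_left W (joinLine_le_span_gptVec_gqptVec hφ hτ t t'))

/-- If `P̄, Q̄ ∈ ℓ∞` are conjugate with respect to a Baer subline `b` of `ℓ∞`, then the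
lines `PQ^q` and `P^qQ` of `PG(4,q²)` belong to the regulus opposite to the regulus of
transversals of `{[T]⋆ : T̄ ∈ b}`: they meet every line meeting all the `[T]⋆`. -/
theorem statement_6
    {F K : Type} [Field F] [Field K] [Fintype F] [Fintype K] [Algebra F K]
    (q : ℕ) (hq : Fintype.card F = q) (hK : Fintype.card K = q ^ 2)
    (τ : K) (t0 t1 : F)
    (hτ : τ ^ 2 = algebraMap F K t1 * τ + algebraMap F K t0)
    (hτF : τ ∉ Set.range (algebraMap F K))
    (c0 c1 : K → F)
    (hc : ∀ x : K, x = algebraMap F K (c0 x) + algebraMap F K (c1 x) * τ)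
    (b : Set (PP K 3)) (tP tQ : Option K)
    (hconj : ConjWrtSubline F q b (ptInf tP) (ptInf tQ)) :
    ∀ mℓ : Set (PP K 5), IsFlat 1 mℓ →
      (∀ t : Option K, ptInf t ∈ b →
        (mℓ ∩ extSpreadLine F c0 c1 t0 t1 t).Nonempty) →
      (mℓ ∩ lineTh (gpt τ q tP) (gqpt τ q tQ)).Nonempty ∧
      (mℓ ∩ lineTh (gqpt τ q tP) (gpt τ q tQ)).Nonempty := by
  rintro _ ⟨W, hW, rfl⟩ hmeet
  subst hq
  set φ : K →+* K := (FiniteField.frobeniusAlgHom F K).toRingHom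
  have hφ : ∀ x, φ x = x ^ Fintype.card F := fun _ => rfl
  have hτφ : φ τ ≠ τ := FiniteField.frobeniusAlgHom_apply_ne_self hτF
  obtain ⟨N, hN, hb, y, hy, ⟨cP, hcP, hPy⟩, cQ, hcQ, hQy⟩ :=
    hconj.exists_coords hφ
  have hline : ∀ ξ : Fin 2 → K, ![ξ 0, ξ 1, 0] ∈ sublineVecs F K → ξ ≠ 0 → mapVec φ ξ = ξ →
      W ⊓ joinLine τ (φ τ) (N *ᵥ ξ) (N.map φ *ᵥ ξ) ≠ ⊥ := fun ξ hξb hξ hξφ => by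
    obtain ⟨t, htb, c, hc0, hpt⟩ := hb ξ hξb hξ
    exact inf_joinLine_ne_bot_of_meets_extSpreadLine (FiniteField.frobeniusAlgHom F K).commutes
      hτ hc (hmeet t htb) hc0 hpt hξφ
  have hreg : ∀ {z : Fin 2 → K}, z ≠ 0 → W ⊓ joinLine τ (φ τ) (N *ᵥ z) (N.map φ *ᵥ z) ≠ ⊥ :=
    inf_joinLine_ne_bot_of_three hτφ.symm hN (RingHom.map_det φ N ▸ hN.map φ) hW.le
      (linearIndependent_pair_of_det_ne_zero (by simp))
      (linearIndependent_pair_of_det_ne_zero (by simp))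
      (linearIndependent_pair_of_det_ne_zero (by simp))
      (hline ![0, 1] (Or.inl ⟨0, by simp⟩) (by simp) (by ext i; fin_cases i <;> simp [mapVec]))
      (hline ![1, 0] (Or.inr (by simp)) (by simp) (by ext i; fin_cases i <;> simp [mapVec]))
      (hline ![1, 1] (Or.inl ⟨1, by simp⟩) (by simp) (by ext i; fin_cases i <;> simp [mapVec]))
  constructor
  · refine inter_lineTh_nonempty hφ hτφ ?_
    rw [hPy, hQy, mapVec_smul, mapVec_mulVec, mapVec_mapVec (FiniteField.frobeniusAlgHom_apply_apply hK),
      joinLine_smul_smul _ _ hcP ((map_ne_zero φ).2 hcQ)]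
    exact hreg hy
  · rw [lineTh_comm]
    refine inter_lineTh_nonempty hφ hτφ ?_
    rw [hQy, hPy, mapVec_smul, mapVec_mulVec, joinLine_smul_smul _ _ hcQ ((map_ne_zero φ).2 hcP)]
    exact hreg (mapVec_ne_zero φ hy)

end BaerConics
end
end

section
/- Let f be a quadratic form over K = GF(q²) whose zero set in PG(2,q²) is an F_{q²}-conic 𝒪, and write f = f∞ + τ·f₀ in Bruck–Bose coordinates. For t ∈ F = GF(q) set f_t = t·f∞ + f₀, and set f_∞ = f∞. Then for every t ∈ F ∪ {∞}, the number of points of the transversal line g that lie on the quadric {f_t = 0} of PG(4,q²) equals |𝒪 ∩ ℓ∞| (which is 0, 1 or 2). -/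
open scoped Classical
open Matrix

noncomputable section

namespace BaerConics

variable {K : Type} [Field K] {m n : ℕ}

/-- The Bruck-Bose substitution `(x₀,x₁,y₀,y₁,z) ↦ (x₀+x₁τ, y₀+y₁τ, z)`. -/
def bbSubst (F : Type) {K : Type} [Field F] [Field K] [Algebra F K] (τ : K)
    (v : Fin 5 → F) : Fin 3 → K :=
  ![algebraMap F K (v 0) + algebraMap F K (v 1) * τ,
    algebraMap F K (v 2) + algebraMap F K (v 3) * τ,
    algebraMap F K (v 4)]

/-!
A point of the transversal `g` is `x₀ A₀ + x₁ A₁`. The Bruck-Bose substitution with `τ` sends it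
to `(τ^q - τ) (x₀, x₁, 0)`, while the conjugate substitution with `τ^q` sends it to `0`. Both
`f ∘ bb_τ = f∞ + τ f₀` and its Frobenius conjugate `f^q ∘ bb_{τ^q} = f∞ + τ^q f₀` are identities of
quadratic forms over `K`, since the two sides agree on `F`-points. Evaluated on `g` they give
`f₀ = -(τ^q - τ) f` and `f∞ = τ^q (τ^q - τ) f`, so each `f_t` restricted to `g` is a multiple of
`f` restricted to `ℓ∞`, by a factor that is nonzero because `τ ∉ F`. The projective map `ℓ∞ → g`, `(x₀, x₁, 0) ↦ x₀ A₀ + x₁ A₁`,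
therefore carries `𝒪 ∩ ℓ∞` bijectively onto `g ∩ {f_t = 0}`.
-/

end BaerConics

theorem Projectivization.image_map_setOf_rep {K V W : Type} [Field K] [AddCommGroup V]
    [Module K V] [AddCommGroup W] [Module K W] (f : V →ₗ[K] W) (hf : Function.Injective f)
    {P : V → Prop} {Q : W → Prop} (hP : ∀ (a : Kˣ) v, P (a • v) ↔ P v)
    (hQ : ∀ (a : Kˣ) w, Q (a • w) ↔ Q w) (hPQ : ∀ v, Q (f v) ↔ P v)
    (hQf : ∀ w, Q w → ∃ v, f v = w) :
    Projectivization.map f hf '' {p | P p.rep} = {p | Q p.rep} := by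
  have hrepP : ∀ v hv, P (Projectivization.mk K v hv).rep ↔ P v := fun v hv => by
    obtain ⟨a, ha⟩ := Projectivization.exists_smul_eq_mk_rep K v hv
    rw [← ha, hP]
  have hrepQ : ∀ w hw, Q (Projectivization.mk K w hw).rep ↔ Q w := fun w hw => by
    obtain ⟨a, ha⟩ := Projectivization.exists_smul_eq_mk_rep K w hw
    rw [← ha, hQ]
  ext p
  constructor
  · rintro ⟨p, hp, rfl⟩
    rw [← p.mk_rep] at hp ⊢
    rw [Set.mem_ofPred_eq, Projectivization.map_mk, hrepQ, hPQ, ← hrepP _ p.rep_nonzero]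
    exact hp
  · intro hp
    obtain ⟨v, hv⟩ := hQf _ hp
    have hv0 : v ≠ 0 := by
      rintro rfl
      exact p.rep_nonzero (by rw [← hv, map_zero])
    refine ⟨Projectivization.mk K v hv0, ?_, ?_⟩
    · rw [Set.mem_ofPred_eq, hrepP, ← hPQ, hv]
      exact hp
    · rw [Projectivization.map_mk, ← p.mk_rep]
      congr

theorem FiniteField.mem_range_algebraMap_of_pow_card_eq_self {F K : Type} [Field F] [Fintype F]
    [Field K] [Finite K] [Algebra F K] {x : K} (hx : x ^ Fintype.card F = x) :
    x ∈ Set.range (algebraMap F K) := by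
  have hfix : ∀ k : ℕ, (FiniteField.frobeniusAlgEquivOfAlgebraic F K ^ k) x = x := by
    intro k
    induction k with
    | zero => rfl
    | succ k ih =>
      rw [pow_succ, AlgEquiv.mul_apply, FiniteField.coe_frobeniusAlgEquivOfAlgebraic]
      exact (congrArg _ hx).trans ih
  rw [IsGalois.mem_range_algebraMap_iff_fixed]
  intro f
  obtain ⟨n, rfl⟩ := (FiniteField.bijective_frobeniusAlgEquivOfAlgebraic_pow F K).2 f
  exact hfix n

namespace BaerConics

section QuadraticForms

variable {K : Type} [Field K] {m n : ℕ}

lemma qeval_smul (M : Matrix (Fin n) (Fin n) K) (c : K) (v : Fin n → K) :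
    qeval M (c • v) = c ^ 2 * qeval M v := by
  simp only [qeval, mulVec_smul, smul_dotProduct, dotProduct_smul, smul_eq_mul]
  ring

lemma qeval_units_smul_eq_zero_iff (M : Matrix (Fin n) (Fin n) K) (a : Kˣ) (v : Fin n → K) :
    qeval M (a • v) = 0 ↔ qeval M v = 0 := by
  rw [Units.smul_def, qeval_smul, mul_eq_zero, or_iff_right (pow_ne_zero 2 a.ne_zero)]

lemma qeval_add_left (A B : Matrix (Fin n) (Fin n) K) (v : Fin n → K) :
    qeval (A + B) v = qeval A v + qeval B v := by
  simp only [qeval, add_mulVec, dotProduct_add]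

lemma qeval_smul_left (c : K) (A : Matrix (Fin n) (Fin n) K) (v : Fin n → K) :
    qeval (c • A) v = c * qeval A v := by
  simp only [qeval, smul_mulVec, dotProduct_smul, smul_eq_mul]

lemma qeval_transpose_mul_mul (L : Matrix (Fin m) (Fin n) K) (M : Matrix (Fin m) (Fin m) K)
    (w : Fin n → K) : qeval (Lᵀ * M * L) w = qeval M (L *ᵥ w) := by
  rw [qeval, qeval, ← mulVec_mulVec, ← mulVec_mulVec, dotProduct_mulVec, vecMul_transpose]

lemma qeval_map {L : Type} [Field L] (φ : K →+* L) (A : Matrix (Fin n) (Fin n) K)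
    (v : Fin n → K) : qeval (A.map φ) (mapVec φ v) = φ (qeval A v) := by
  simp only [qeval, mapVec, mulVec, dotProduct, map_apply, map_sum, map_mul]

lemma qeval_map_algVec {F : Type} [Field F] [Algebra F K] (A : Matrix (Fin n) (Fin n) F)
    (v : Fin n → F) : qeval (A.map (algebraMap F K)) (algVec F v) = algebraMap F K (qeval A v) :=
  qeval_map (algebraMap F K) A v

lemma qeval_eq_zero_of_alternating (N : Matrix (Fin n) (Fin n) K)
    (hdiag : ∀ i, N i i = 0) (hanti : ∀ i j, N i j + N j i = 0) (w : Fin n → K) :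
    qeval N w = 0 := by
  have hsum : qeval N w = ∑ p : Fin n × Fin n, w p.1 * (N p.1 p.2 * w p.2) := by
    rw [Fintype.sum_prod_type]
    simp only [qeval, dotProduct, mulVec, Finset.mul_sum]
  -- the terms indexed by `(i, j)` and `(j, i)` cancel, and the diagonal terms vanish
  rw [hsum]
  refine Finset.sum_involution (fun p _ => p.swap) (fun p _ => ?_) (fun p _ hp hswap => ?_)
    (fun _ _ => Finset.mem_univ _) (fun p _ => p.swap_swap)
  · simp only [Prod.fst_swap, Prod.snd_swap]
    linear_combination (w p.1 * w p.2) * hanti p.1 p.2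
  · refine hp ?_
    rw [show p.2 = p.1 from congrArg Prod.fst hswap, hdiag]
    ring

lemma qeval_eq_zero_of_forall_algVec {F : Type} [Field F] [Algebra F K]
    (N : Matrix (Fin n) (Fin n) K) (h : ∀ v : Fin n → F, qeval N (algVec F v) = 0)
    (w : Fin n → K) : qeval N w = 0 := by
  have hsingle : ∀ i : Fin n, algVec F (Pi.single i (1 : F)) = Pi.single i (1 : K) := fun i => by
    funext j
    simp [algVec, Pi.single_apply, apply_ite (algebraMap F K)]
  have hdiag : ∀ i, N i i = 0 := fun i => by
    simpa [hsingle, qeval, mulVec_single, dotProduct_single] using h (Pi.single i 1)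
  refine qeval_eq_zero_of_alternating N hdiag (fun i j => ?_) w
  rcases eq_or_ne i j with rfl | hij
  · rw [hdiag, add_zero]
  · have hpair : algVec F (Pi.single i (1 : F) + Pi.single j 1)
        = (Pi.single i 1 + Pi.single j 1 : Fin n → K) := by
      rw [← hsingle, ← hsingle]
      funext k
      simp [algVec]
    have hvalue := h (Pi.single i 1 + Pi.single j 1)
    rw [hpair] at hvalue
    simpa [qeval, mulVec_add, mulVec_single, dotProduct_add, add_dotProduct,
      dotProduct_single, single_dotProduct, Pi.single_apply, hij, hij.symm, hdiag,
      add_comm (N j i)] using hvalue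

lemma qeval_eq_of_forall_algVec {F : Type} [Field F] [Algebra F K]
    (A B : Matrix (Fin n) (Fin n) K)
    (h : ∀ v : Fin n → F, qeval A (algVec F v) = qeval B (algVec F v)) (w : Fin n → K) :
    qeval A w = qeval B w := by
  have hsub : ∀ u, qeval (A - B) u = qeval A u - qeval B u := fun u => by
    simp only [qeval, sub_mulVec, dotProduct_sub]
  have := qeval_eq_zero_of_forall_algVec (A - B) (fun v => by rw [hsub, h, sub_self]) w
  rwa [hsub, sub_eq_zero] at this

end QuadraticForms

section BruckBose

variable {F K : Type} [Field F] [Field K] [Algebra F K]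

def bbMatrix (τ : K) : Matrix (Fin 3) (Fin 5) K :=
  !![1, τ, 0, 0, 0; 0, 0, 1, τ, 0; 0, 0, 0, 0, 1]

lemma bbMatrix_mulVec (τ : K) (w : Fin 5 → K) :
    bbMatrix τ *ᵥ w = ![w 0 + w 1 * τ, w 2 + w 3 * τ, w 4] := by
  funext i
  fin_cases i <;> simp [bbMatrix, mulVec, dotProduct, Fin.sum_univ_five] <;> ring

lemma bbMatrix_mulVec_algVec {L : Type} [Field L] [Algebra F L] (φ : K →ₐ[F] L) (τ : K)
    (v : Fin 5 → F) : bbMatrix (φ τ) *ᵥ algVec F v = mapVec (φ : K →+* L) (bbSubst F τ v) := by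
  rw [bbMatrix_mulVec]
  funext i
  fin_cases i <;> simp [algVec, mapVec, bbSubst]

theorem qeval_bbMatrix_mulVec {L : Type} [Field L] [Algebra F L] (φ : K →ₐ[F] L) {τ : K}
    {M : Matrix (Fin 3) (Fin 3) K} {Minf M0 : Matrix (Fin 5) (Fin 5) F}
    (hdec : ∀ v : Fin 5 → F, qeval M (bbSubst F τ v) =
      algebraMap F K (qeval Minf v) + algebraMap F K (qeval M0 v) * τ)
    (w : Fin 5 → L) :
    qeval (M.map φ) (bbMatrix (φ τ) *ᵥ w) =
      qeval (Minf.map (algebraMap F L)) w + φ τ * qeval (M0.map (algebraMap F L)) w := by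
  rw [← qeval_transpose_mul_mul, ← qeval_smul_left, ← qeval_add_left]
  refine qeval_eq_of_forall_algVec (F := F) _ _ (fun v => ?_) w
  rw [qeval_transpose_mul_mul, qeval_add_left, qeval_smul_left, bbMatrix_mulVec_algVec]
  have hMφ := qeval_map (φ : K →+* L) M (bbSubst F τ v)
  simp only [RingHom.coe_coe] at hMφ
  rw [hMφ, qeval_map_algVec, qeval_map_algVec, hdec, map_add, map_mul, AlgHom.commutes,
    AlgHom.commutes]
  ring

end BruckBose

section Transversal

variable {K : Type} [Field K]

/-- `x ↦ x₀ A₀ + x₁ A₁ + x₂ e₄` for `s = τ^q`; the `e₄` term only serves to make it injective. -/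
def transversalMap (s : K) : (Fin 3 → K) →ₗ[K] (Fin 5 → K) where
  toFun x := ![s * x 0, -x 0, s * x 1, -x 1, x 2]
  map_add' x y := by funext i; fin_cases i <;> simp <;> ring
  map_smul' c x := by funext i; fin_cases i <;> simp <;> ring

lemma transversalMap_apply (s : K) (x : Fin 3 → K) :
    transversalMap s x = ![s * x 0, -x 0, s * x 1, -x 1, x 2] := rfl

lemma transversalMap_injective (s : K) : Function.Injective (transversalMap s) := by
  intro x y h
  have h1 := congrFun h 1
  have h3 := congrFun h 3
  have h4 := congrFun h 4
  simp only [transversalMap_apply] at h1 h3 h4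
  funext i
  fin_cases i <;> simp_all

lemma transversalMap_eq_of_two_eq_zero (τ : K) (q : ℕ) {x : Fin 3 → K} (hx : x 2 = 0) :
    transversalMap (τ ^ q) x = x 0 • A0v τ q + x 1 • A1v τ q := by
  funext i
  fin_cases i <;> simp [transversalMap_apply, A0v, A1v, hx, mul_comm]

lemma transversalMap_mem_span_iff (τ : K) (q : ℕ) (x : Fin 3 → K) :
    transversalMap (τ ^ q) x ∈ Submodule.span K {A0v τ q, A1v τ q} ↔ x 2 = 0 := by
  refine ⟨fun hx => ?_, fun hx => ?_⟩
  · obtain ⟨a, b, hab⟩ := Submodule.mem_span_pair.1 hx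
    simpa [transversalMap_apply, A0v, A1v] using (congrFun hab 4).symm
  · rw [transversalMap_eq_of_two_eq_zero τ q hx]
    exact Submodule.mem_span_pair.2 ⟨x 0, x 1, rfl⟩

lemma exists_transversalMap_eq_of_mem_span (τ : K) (q : ℕ) {w : Fin 5 → K}
    (hw : w ∈ Submodule.span K {A0v τ q, A1v τ q}) : ∃ x, transversalMap (τ ^ q) x = w := by
  obtain ⟨a, b, rfl⟩ := Submodule.mem_span_pair.1 hw
  exact ⟨![a, b, 0], by rw [transversalMap_eq_of_two_eq_zero τ q rfl]; rfl⟩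

lemma bbMatrix_mulVec_transversalMap (s t : K) {x : Fin 3 → K} (hx : x 2 = 0) :
    bbMatrix t *ᵥ transversalMap s x = (s - t) • x := by
  rw [bbMatrix_mulVec]
  funext i
  fin_cases i <;> simp [transversalMap_apply, hx] <;> ring

theorem image_map_transversalMap {τ : K} {q : ℕ} {M : Matrix (Fin 3) (Fin 3) K}
    {N : Matrix (Fin 5) (Fin 5) K} {c : K} (hc : c ≠ 0)
    (hval : ∀ x : Fin 3 → K, x 2 = 0 → qeval N (transversalMap (τ ^ q) x) = c * qeval M x) :
    Projectivization.map (transversalMap (τ ^ q)) (transversalMap_injective _) ''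
        ({p : PP K 3 | qeval M p.rep = 0} ∩ linf K) =
      {p : PP K 5 | p ∈ gline τ q ∧ qeval N p.rep = 0} := by
  refine Projectivization.image_map_setOf_rep _ _ (P := fun x => qeval M x = 0 ∧ x 2 = 0)
    (Q := fun w => w ∈ Submodule.span K {A0v τ q, A1v τ q} ∧ qeval N w = 0)
    (fun a v => ?_) (fun a w => ?_) (fun x => ?_) (fun w hw => ?_)
  · rw [qeval_units_smul_eq_zero_iff, Pi.smul_apply, Units.smul_def, smul_eq_mul,
      mul_eq_zero, or_iff_right a.ne_zero]
  · simp only [qeval_units_smul_eq_zero_iff, Submodule.smul_mem_iff']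
  · rw [transversalMap_mem_span_iff]
    by_cases hx : x 2 = 0
    · simp only [hx, hval x hx, mul_eq_zero, hc, false_or, and_true, true_and]
    · simp only [hx, and_false, false_and]
  · exact exists_transversalMap_eq_of_mem_span τ q hw.1

end Transversal

section Pencil

variable {F K : Type} [Field F] [Fintype F] [Field K] [Algebra F K] {τ : K}
  {M : Matrix (Fin 3) (Fin 3) K} {Minf M0 : Matrix (Fin 5) (Fin 5) F}

theorem qeval_transversalMap (hτ : τ ^ Fintype.card F ≠ τ)
    (hdec : ∀ v : Fin 5 → F, qeval M (bbSubst F τ v) =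
      algebraMap F K (qeval Minf v) + algebraMap F K (qeval M0 v) * τ)
    {x : Fin 3 → K} (hx : x 2 = 0) :
    qeval (Minf.map (algebraMap F K)) (transversalMap (τ ^ Fintype.card F) x) =
        τ ^ Fintype.card F * ((τ ^ Fintype.card F - τ) * qeval M x) ∧
      qeval (M0.map (algebraMap F K)) (transversalMap (τ ^ Fintype.card F) x) =
        -((τ ^ Fintype.card F - τ) * qeval M x) := by
  set s := τ ^ Fintype.card F
  set w := transversalMap s x
  have hid := qeval_bbMatrix_mulVec (AlgHom.id F K) hdec w
  have hfrob := qeval_bbMatrix_mulVec (FiniteField.frobeniusAlgHom F K) hdec w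
  simp only [AlgHom.coe_id, map_id, id_eq, FiniteField.frobeniusAlgHom_apply] at hid hfrob
  rw [bbMatrix_mulVec_transversalMap s τ hx, qeval_smul] at hid
  rw [bbMatrix_mulVec_transversalMap s s hx, qeval_smul, sub_self] at hfrob
  have hM0 : qeval (M0.map (algebraMap F K)) w = -((s - τ) * qeval M x) := by
    refine mul_left_cancel₀ (sub_ne_zero.2 hτ) ?_
    linear_combination hid - hfrob
  exact ⟨by linear_combination -hfrob - s * hM0, hM0⟩

lemma algebraMap_mul_pow_card_ne_one (hτF : τ ∉ Set.range (algebraMap F K)) (r : F) :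
    algebraMap F K r * τ ^ Fintype.card F ≠ 1 := by
  intro h
  have hr : r ≠ 0 := by
    rintro rfl
    simp at h
  -- `τ^q` lies in `F`, and the Frobenius is injective and fixes `F`
  have hτq : FiniteField.frobeniusAlgHom F K τ = FiniteField.frobeniusAlgHom F K
      (algebraMap F K r⁻¹) := by
    rw [AlgHom.commutes, FiniteField.frobeniusAlgHom_apply, map_inv₀, eq_inv_of_mul_eq_one_right h]
  exact hτF ⟨r⁻¹, ((FiniteField.frobeniusAlgHom F K).toRingHom.injective hτq).symm⟩

theorem exists_qeval_pencil_transversalMap [Finite K] (hτF : τ ∉ Set.range (algebraMap F K))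
    (hdec : ∀ v : Fin 5 → F, qeval M (bbSubst F τ v) =
      algebraMap F K (qeval Minf v) + algebraMap F K (qeval M0 v) * τ)
    (t : Option F) :
    ∃ c : K, c ≠ 0 ∧ ∀ x : Fin 3 → K, x 2 = 0 →
      qeval ((t.elim Minf fun s => s • Minf + M0).map (algebraMap F K))
        (transversalMap (τ ^ Fintype.card F) x) = c * qeval M x := by
  set s := τ ^ Fintype.card F
  have hτ : s ≠ τ := fun h => hτF (FiniteField.mem_range_algebraMap_of_pow_card_eq_self h)
  have hτ0 : τ ≠ 0 := by
    rintro rfl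
    exact hτF ⟨0, map_zero _⟩
  cases t with
  | none =>
    refine ⟨s * (s - τ), mul_ne_zero (pow_ne_zero _ hτ0) (sub_ne_zero.2 hτ), fun x hx => ?_⟩
    rw [Option.elim_none, (qeval_transversalMap hτ hdec hx).1, mul_assoc]
  | some r =>
    refine ⟨(s - τ) * (algebraMap F K r * s - 1),
      mul_ne_zero (sub_ne_zero.2 hτ) (sub_ne_zero.2 (algebraMap_mul_pow_card_ne_one hτF r)),
      fun x hx => ?_⟩
    obtain ⟨hinf, hzero⟩ := qeval_transversalMap hτ hdec hx
    rw [Option.elim_some, Matrix.map_add _ (map_add _), Matrix.map_smul' _ _ _ (map_mul _),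
      qeval_add_left, qeval_smul_left, hinf, hzero]
    ring

end Pencil

theorem statement_8_general
    {F K : Type} [Field F] [Field K] [Fintype F] [Fintype K] [Algebra F K]
    (q : ℕ) (hq : Fintype.card F = q)
    (τ : K)
    (hτF : τ ∉ Set.range (algebraMap F K))
    (M : Matrix (Fin 3) (Fin 3) K)
    (Minf M0 : Matrix (Fin 5) (Fin 5) F)
    (hdec : ∀ v : Fin 5 → F, qeval M (bbSubst F τ v) =
      algebraMap F K (qeval Minf v) + algebraMap F K (qeval M0 v) * τ) :
    ∀ t : Option F,
      {p : PP K 5 | p ∈ gline τ q ∧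
        qeval ((t.elim Minf fun s => s • Minf + M0).map (algebraMap F K)) p.rep
          = 0}.ncard
      = ({p : PP K 3 | qeval M p.rep = 0} ∩ linf K).ncard := by
  intro t
  subst hq
  obtain ⟨c, hc, hval⟩ := exists_qeval_pencil_transversalMap hτF hdec t
  rw [← image_map_transversalMap hc hval,
    Set.ncard_image_of_injective _ (Projectivization.map_injective _ _)]

/-- Each quadric `f_t = t f∞ + f₀` of the Bruck-Bose pencil of a nondegenerate conic `𝒪`
meets the transversal `g` in exactly `|𝒪 ∩ ℓ∞|` points. -/
theorem statement_8
    {F K : Type} [Field F] [Field K] [Fintype F] [Fintype K] [Algebra F K]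
    (q : ℕ) (hq : Fintype.card F = q) (hK : Fintype.card K = q ^ 2)
    (τ : K) (t0 t1 : F)
    (hτ : τ ^ 2 = algebraMap F K t1 * τ + algebraMap F K t0)
    (hτF : τ ∉ Set.range (algebraMap F K))
    (c0 c1 : K → F)
    (hc : ∀ x : K, x = algebraMap F K (c0 x) + algebraMap F K (c1 x) * τ)
    (M : Matrix (Fin 3) (Fin 3) K)
    (hO : IsFq2Conic {p : PP K 3 | qeval M p.rep = 0})
    (Minf M0 : Matrix (Fin 5) (Fin 5) F)
    (hdec : ∀ v : Fin 5 → F, qeval M (bbSubst F τ v) =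
      algebraMap F K (qeval Minf v) + algebraMap F K (qeval M0 v) * τ) :
    ∀ t : Option F,
      {p : PP K 5 | p ∈ gline τ q ∧
        qeval ((t.elim Minf fun s => s • Minf + M0).map (algebraMap F K)) p.rep
          = 0}.ncard
      = ({p : PP K 3 | qeval M p.rep = 0} ∩ linf K).ncard :=
  statement_8_general q hq τ hτF M Minf M0 hdec

end BaerConics
end
end
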